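/- Let f : ℝⁿ → ℝ be differentiable with L-Lipschitz gradient, γ ∈ (0,1), J ∈ ℝ^{m×n}, H positive semidefinite, and β ≥ L / (2 λ_min (1−γ)) where λ_min is the smallest nonzero eigenvalue of JᵀJ. Suppose the step d lies in the row space of J and satisfies ∇f(x)ᵀ d ≤ − dᵀ Jᵀ(H+βI)J d. Then the Armijo condition f(x+d) ≤ f(x) + γ ∇f(x)ᵀ d holds. -/

import Mathlib

/-!
By the descent lemma, `f (x + d) ≤ f x + ⟪∇f x, d⟫ + L/2 ‖d‖²`. A row-space vector `d = Jᵀ w` is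
orthogonal to `ker (JᵀJ)`, so expanding it in an orthonormal eigenbasis of `JᵀJ` only involves
eigenvalues `≥ λ`, whence `λ ‖d‖² ≤ ‖J d‖²`. The descent condition and `H ⪰ 0` then give
`-⟪∇f x, d⟫ ≥ β ‖J d‖² ≥ β λ ‖d‖² ≥ L ‖d‖² / (2 (1 - γ))`, so the quadratic term of the descent
lemma is at most `-(1 - γ) ⟪∇f x, d⟫`.
-/

open scoped Matrix RealInnerProductSpace
open Module End

section Descent

variable {E : Type*} [NormedAddCommGroup E] [InnerProductSpace ℝ E] [CompleteSpace E]

theorem le_add_inner_add_of_hasGradientAt_of_lipschitz {f : E → ℝ} {f' : E → E} {L : ℝ}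
    (hf : ∀ x, HasGradientAt f (f' x) x) (hL : ∀ x y, ‖f' x - f' y‖ ≤ L * ‖x - y‖) (x d : E) :
    f (x + d) ≤ f x + ⟪f' x, d⟫ + L / 2 * ‖d‖ ^ 2 := by
  set φ : ℝ → ℝ := fun t => f (x + t • d) - t * ⟪f' x, d⟫ - L / 2 * t ^ 2 * ‖d‖ ^ 2
  have hφ : ∀ t, HasDerivAt φ (⟪f' (x + t • d), d⟫ - ⟪f' x, d⟫ - L * t * ‖d‖ ^ 2) t := by
    intro t
    have hpath : HasDerivAt (fun s : ℝ => x + s • d) d t := by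
      simpa using ((hasDerivAt_id t).smul_const d).const_add x
    have h := (((hf (x + t • d)).hasFDerivAt.comp_hasDerivAt t hpath).sub
      ((hasDerivAt_id t).mul_const ⟪f' x, d⟫)).sub
      (((hasDerivAt_pow 2 t).const_mul (L / 2)).mul_const (‖d‖ ^ 2))
    refine h.congr_deriv ?_
    simp only [InnerProductSpace.toDual_apply_apply]
    ring
  have hφ_nonpos : ∀ t, 0 ≤ t → ⟪f' (x + t • d), d⟫ - ⟪f' x, d⟫ - L * t * ‖d‖ ^ 2 ≤ 0 := by
    intro t ht
    have h : ⟪f' (x + t • d), d⟫ - ⟪f' x, d⟫ ≤ L * t * ‖d‖ ^ 2 := calc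
      _ = ⟪f' (x + t • d) - f' x, d⟫ := (inner_sub_left ..).symm
      _ ≤ ‖f' (x + t • d) - f' x‖ * ‖d‖ := real_inner_le_norm _ _
      _ ≤ L * ‖(x + t • d) - x‖ * ‖d‖ := by gcongr; exact hL _ _
      _ = L * t * ‖d‖ ^ 2 := by rw [add_sub_cancel_left, norm_smul, Real.norm_of_nonneg ht]; ring
    linarith
  have h01 : φ 1 ≤ φ 0 :=
    antitoneOn_of_hasDerivWithinAt_nonpos (convex_Ici 0)
      (fun t _ => (hφ t).continuousAt.continuousWithinAt) (fun t _ => (hφ t).hasDerivWithinAt)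
      (fun t ht => hφ_nonpos t (interior_subset ht)) Set.self_mem_Ici (Set.mem_Ici.2 zero_le_one)
      zero_le_one
  norm_num [φ] at h01
  linarith

end Descent

section Spectral

variable {E : Type*} [NormedAddCommGroup E] [InnerProductSpace ℝ E] [FiniteDimensional ℝ E]
  {T : E →ₗ[ℝ] E}

theorem LinearMap.IsSymmetric.mul_norm_sq_le_inner_apply_of_mem_orthogonal_ker
    (hT : T.IsSymmetric) {lam : ℝ} (hlam : ∀ μ, HasEigenvalue T μ → μ ≠ 0 → lam ≤ μ) {v : E}
    (hv : v ∈ (LinearMap.ker T)ᗮ) : lam * ‖v‖ ^ 2 ≤ ⟪T v, v⟫ := by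
  set b := hT.eigenvectorBasis rfl
  set μ := hT.eigenvalues rfl
  have hb : ∀ i, T (b i) = μ i • b i := fun i => hT.apply_eigenvectorBasis rfl i
  have hexp : ⟪T v, v⟫ = ∑ i, μ i * ⟪b i, v⟫ ^ 2 := by
    rw [← b.sum_inner_mul_inner]
    refine Finset.sum_congr rfl fun i _ => ?_
    rw [hT, hb, real_inner_smul_right, real_inner_comm v]
    ring
  rw [hexp, ← b.sum_sq_inner_right, Finset.mul_sum]
  refine Finset.sum_le_sum fun i _ => ?_
  by_cases hμ : μ i = 0
  · have hker : b i ∈ LinearMap.ker T := by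
      rw [LinearMap.mem_ker, hb, hμ, zero_smul]
    simp [Submodule.inner_right_of_mem_orthogonal hker hv]
  · exact mul_le_mul_of_nonneg_right (hlam _ (hT.hasEigenvalue_eigenvalues rfl i) hμ) (sq_nonneg _)

end Spectral

theorem Matrix.hasEigenvalue_toEuclideanLin_iff {n : Type*} [Fintype n] [DecidableEq n]
    {A : Matrix n n ℝ} {μ : ℝ} :
    HasEigenvalue A.toEuclideanLin μ ↔ HasEigenvalue A.toLin' μ := by
  rw [hasEigenvalue_iff_mem_spectrum, hasEigenvalue_iff_mem_spectrum, Matrix.spectrum_toLin',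
    Matrix.spectrum_toLpLin]

theorem Matrix.mul_norm_sq_le_mulVec_dotProduct_mulVec {m n : Type*} [Fintype m] [Fintype n]
    [DecidableEq n] (J : Matrix m n ℝ) {lam : ℝ}
    (hlam : ∀ μ, HasEigenvalue (Jᵀ * J).toLin' μ → μ ≠ 0 → lam ≤ μ)
    (d : EuclideanSpace ℝ n) (hd : ∃ w, d.ofLp = Jᵀ *ᵥ w) :
    lam * ‖d‖ ^ 2 ≤ (J *ᵥ d.ofLp) ⬝ᵥ (J *ᵥ d.ofLp) := by
  obtain ⟨w, hw⟩ := hd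
  have hT : (Jᵀ * J).toEuclideanLin.IsSymmetric :=
    isSymmetric_toEuclideanLin_iff.mpr (by simpa using isHermitian_conjTranspose_mul_self J)
  have hv : d ∈ (LinearMap.ker (Jᵀ * J).toEuclideanLin)ᗮ := by
    rw [Submodule.mem_orthogonal']
    intro u hu
    have hJu : J *ᵥ u = 0 := by
      simpa using (conjTranspose_mul_self_mulVec_eq_zero J u).mp (congrArg WithLp.ofLp hu)
    rw [EuclideanSpace.inner_eq_star_dotProduct, star_trivial, hw,
      dotProduct_mulVec, vecMul_transpose, hJu, zero_dotProduct]
  convert hT.mul_norm_sq_le_inner_apply_of_mem_orthogonal_ker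
    (fun μ hμ => hlam μ (hasEigenvalue_toEuclideanLin_iff.mp hμ)) hv using 1
  rw [EuclideanSpace.inner_eq_star_dotProduct, star_trivial, dotProduct_comm, Matrix.ofLp_toLpLin,
    toLin'_apply, ← mulVec_mulVec, dotProduct_mulVec d.ofLp Jᵀ, vecMul_transpose]

theorem armijo_condition_general (m n : ℕ) (f : EuclideanSpace ℝ (Fin n) → ℝ) (L : ℝ)
    (hdiff : ∀ x, HasGradientAt f (gradient f x) x)
    (hLip : ∀ x y, ‖gradient f x - gradient f y‖ ≤ L * ‖x - y‖)
    (γ : ℝ) (hγ1 : γ < 1)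
    (J : Matrix (Fin m) (Fin n) ℝ) (H : Matrix (Fin m) (Fin m) ℝ) (hH : H.PosSemidef)
    (lam : ℝ) (hlam_pos : 0 < lam)
    (hlam_min : ∀ μ : ℝ, Module.End.HasEigenvalue (Matrix.toLin' (Jᵀ * J)) μ →
      μ ≠ 0 → lam ≤ μ)
    (β : ℝ) (hβ : L / (2 * lam * (1 - γ)) ≤ β)
    (x d : EuclideanSpace ℝ (Fin n))
    (hd_row : ∃ w : Fin m → ℝ, (fun i => d i) = Jᵀ.mulVec w)
    (hdesc : ⟪gradient f x, d⟫ ≤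
      - ((J.mulVec fun i => d i) ⬝ᵥ
          ((H + β • (1 : Matrix (Fin m) (Fin m) ℝ)).mulVec (J.mulVec fun i => d i)))) :
    f (x + d) ≤ f x + γ * ⟪gradient f x, d⟫ := by
  obtain rfl | hd := eq_or_ne d 0
  · simp
  set g := ⟪gradient f x, d⟫
  set Jd := J *ᵥ d.ofLp
  have hγ : 0 < 1 - γ := sub_pos.mpr hγ1
  have hL : 0 ≤ L := by
    have h := hLip (x + d) x
    rw [add_sub_cancel_left] at h
    exact nonneg_of_mul_nonneg_left ((norm_nonneg _).trans h) (norm_pos_iff.mpr hd)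
  have hβ0 : 0 ≤ β := (div_nonneg hL (by positivity)).trans hβ
  have hLβ : L ≤ 2 * lam * (1 - γ) * β := (div_le_iff₀' (by positivity)).mp hβ
  have hg : g ≤ -(β * (Jd ⬝ᵥ Jd)) := by
    have hHd : 0 ≤ Jd ⬝ᵥ (H *ᵥ Jd) := hH.dotProduct_mulVec_nonneg Jd
    rw [Matrix.add_mulVec, Matrix.smul_mulVec, Matrix.one_mulVec, dotProduct_add,
      dotProduct_smul, smul_eq_mul] at hdesc
    linarith
  calc f (x + d) ≤ f x + g + L / 2 * ‖d‖ ^ 2 :=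
        le_add_inner_add_of_hasGradientAt_of_lipschitz hdiff hLip x d
    _ ≤ f x + g + (1 - γ) * (β * (lam * ‖d‖ ^ 2)) := by
        have := mul_le_mul_of_nonneg_right hLβ (sq_nonneg ‖d‖)
        linarith
    _ ≤ f x + g + (1 - γ) * (β * (Jd ⬝ᵥ Jd)) := by
        gcongr
        exact J.mul_norm_sq_le_mulVec_dotProduct_mulVec hlam_min d hd_row
    _ ≤ f x + g + (1 - γ) * -g := by gcongr; linarith
    _ = f x + γ * g := by ring

/-- Armijo line search condition (Lemma 3 of the paper): if `f` has `L`-Lipschitz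
gradient, `γ ∈ (0,1)`, `β ≥ L/(2 λmin (1−γ))` where `λmin` is the smallest nonzero
eigenvalue of `JᵀJ`, the step `d` lies in the row space of `J` and satisfies the
descent condition `∇f(x)ᵀ d ≤ − dᵀ Jᵀ(H+βI)J d`, then
`f(x+d) ≤ f(x) + γ ∇f(x)ᵀ d`. -/
theorem armijo_condition (m n : ℕ) (f : EuclideanSpace ℝ (Fin n) → ℝ) (L : ℝ)
    (hdiff : ∀ x, HasGradientAt f (gradient f x) x)
    (hLip : ∀ x y, ‖gradient f x - gradient f y‖ ≤ L * ‖x - y‖)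
    (γ : ℝ) (hγ0 : 0 < γ) (hγ1 : γ < 1)
    (J : Matrix (Fin m) (Fin n) ℝ) (H : Matrix (Fin m) (Fin m) ℝ) (hH : H.PosSemidef)
    (lam : ℝ) (hlam_pos : 0 < lam)
    (hlam_eig : Module.End.HasEigenvalue (Matrix.toLin' (Jᵀ * J)) lam)
    (hlam_min : ∀ μ : ℝ, Module.End.HasEigenvalue (Matrix.toLin' (Jᵀ * J)) μ →
      μ ≠ 0 → lam ≤ μ)
    (β : ℝ) (hβ : L / (2 * lam * (1 - γ)) ≤ β)
    (x d : EuclideanSpace ℝ (Fin n))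
    (hd_row : ∃ w : Fin m → ℝ, (fun i => d i) = Jᵀ.mulVec w)
    (hdesc : ⟪gradient f x, d⟫ ≤
      - ((J.mulVec fun i => d i) ⬝ᵥ
          ((H + β • (1 : Matrix (Fin m) (Fin m) ℝ)).mulVec (J.mulVec fun i => d i)))) :
    f (x + d) ≤ f x + γ * ⟪gradient f x, d⟫ :=
  armijo_condition_general m n f L hdiff hLip γ hγ1 J H hH lam hlam_pos hlam_min β hβ x d hd_row
    hdesc
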